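/- For a forest T_v rooted at a hypernode v, let ℒ_i(v) be the collection of all possible hypernodes x_i that can be chosen by the SEI selection process at level i of the tree (level 0 being the root hypernode v, so x_0 = v). Assuming all relevant subtree costs are positive, CV²(|v|·C_SEI(T_v)) ≤ ∏_{i=0}^{n−1} max over x_i ∈ ℒ_i and x_{i+1} ∈ H(x_i) of α(x_i, x_{i+1}), minus 1, where α(x_i, x_{i+1}) = [ r(S(x_i)) / r(x_{i+1}) ] · [ Cost(T_{x_{i+1}}) / Cost(T_{S(x_i)}) ]. (Paper's Corollary 2.) -/

import Mathlib

/-!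
Write `Z_u = |u| · C_SEI(T_u)`. One step of the recursion reads
`Z_u = c(u) + (r(S(u)) / r(w)) · Z_w`, and every node of `S(u)` lies in the same number
`C(|S(u)| - 1, |w| - 1)` of the hypernodes `w ∈ H(u)`; hence the weights
`P(w) · r(S(u)) / r(w)` average `Cost(T_w)` to `Cost(T_{S(u)})`, and `E[Z_u] = Cost(T_u)`.

In `E[Z_u²]` the branch `w` contributes the same weight times
`(r(S(u)) / r(w)) · Cost(T_w)² · Π_{i+1} = Cost(T_w) · α(u, w) Π_{i+1} · Cost(T_{S(u)})`,
where `Π_{i+1}` bounds `E[Z_w²] / Cost(T_w)²` at the next level. So `E[Z_u²] ≤ Π_i · Cost(T_u)²`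
by induction over the levels, for any `Π ≥ 1` with `α(u, w) Π_{i+1} ≤ Π_i` along the pairs of
level `i`. The products of the level maxima of `α` form such a `Π`: each maximum is at least
`1`, because the `P`-average of `α(u, ·)` is `1`. Finally `CV² = E[Z²] / E[Z]² - 1 ≤ Π_0 - 1`.
-/

open Finset

/-- A finite rooted tree on a finite node type `V`.  The root is its own parent,
every non-root node has a parent whose depth is one smaller, and the root is the
unique node of depth `0`. -/
structure FinRootedTree (V : Type) [Fintype V] [DecidableEq V] where
  root : V
  parent : V → V
  depth : V → ℕ
  depth_root : depth root = 0
  parent_root : parent root = root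
  depth_parent : ∀ v, v ≠ root → depth (parent v) + 1 = depth v
  eq_root_of_depth_zero : ∀ v, depth v = 0 → v = root

namespace FinRootedTree

variable {V : Type} [Fintype V] [DecidableEq V]

/-- The set of children of a node. -/
def children (T : FinRootedTree V) (x : V) : Finset V :=
  Finset.univ.filter fun w => w ≠ T.root ∧ T.parent w = x

/-- `S(v)`: the set of all children of nodes of a hypernode `v`. -/
def succs (T : FinRootedTree V) (v : Finset V) : Finset V :=
  v.biUnion T.children

/-- The set of nodes of the subtree rooted at `x` (the descendants of `x`,
including `x` itself). -/
def desc (T : FinRootedTree V) (x : V) : Finset V :=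
  Finset.univ.filter fun w =>
    x ∈ (Finset.range (T.depth w + 1)).image fun k => T.parent^[k] w

/-- `Cost(T_x)`: the total cost of the subtree rooted at `x`. -/
noncomputable def subtreeCost (T : FinRootedTree V) (c : V → ℝ) (x : V) : ℝ :=
  ∑ w ∈ T.desc x, c w

/-- `Cost(T_v)`: the total cost of the forest rooted at the hypernode `v`. -/
noncomputable def forestCost (T : FinRootedTree V) (c : V → ℝ) (v : Finset V) : ℝ :=
  ∑ x ∈ v, T.subtreeCost c x

/-- `H(v)`: the hyperchildren of `v` for budget `B`, i.e. the subsets of `S(v)`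
of size `min B |S(v)|`. -/
def hyper (T : FinRootedTree V) (B : ℕ) (v : Finset V) : Finset (Finset V) :=
  (T.succs v).powersetCard (min B (T.succs v).card)

/-- A hypernode: a nonempty set of distinct nodes, all at the same depth. -/
def IsHypernode (T : FinRootedTree V) (v : Finset V) : Prop :=
  v.Nonempty ∧ ∀ a ∈ v, ∀ b ∈ v, T.depth a = T.depth b

/-- Expectation functional of the SEI estimator `C_SEI(T_v)` (with importance
function `r`): `seiE T c B r fuel v g` is `E[g(C_SEI(T_v))]`, defined by the
recursion of Algorithm 2, where the hypernode `w` is drawn from `H(v)` with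
probability `r(w) / (r(S(v)) * C(|S(v)|-1, |w|-1))`, with enough fuel to reach
the leaves. -/
noncomputable def seiE (T : FinRootedTree V) (c : V → ℝ) (B : ℕ)
    (r : V → ℝ) : ℕ → Finset V → (ℝ → ℝ) → ℝ
  | 0, v, g => g ((∑ x ∈ v, c x) / (v.card : ℝ))
  | fuel + 1, v, g =>
      if T.succs v = ∅ then g ((∑ x ∈ v, c x) / (v.card : ℝ))
      else
        ∑ w ∈ T.hyper B v,
          ((∑ a ∈ w, r a) /
              ((∑ a ∈ T.succs v, r a) *
                ((((T.succs v).card - 1).choose (w.card - 1) : ℕ) : ℝ))) *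
            seiE T c B r fuel w fun y =>
              g ((∑ x ∈ v, c x) / (v.card : ℝ) +
                ((w.card : ℝ) / (v.card : ℝ)) *
                  ((∑ a ∈ T.succs v, r a) / (∑ a ∈ w, r a)) * y)

/-- `Var(|v| * C_SEI(T_v))`. -/
noncomputable def seiVar (T : FinRootedTree V) (c : V → ℝ) (B : ℕ) (r : V → ℝ)
    (fuel : ℕ) (v : Finset V) : ℝ :=
  seiE T c B r fuel v (fun y => ((v.card : ℝ) * y) ^ 2) -
    (seiE T c B r fuel v fun y => (v.card : ℝ) * y) ^ 2

/-- `CV²(|v| * C_SEI(T_v)) = Var(|v| * C_SEI(T_v)) / E[|v| * C_SEI(T_v)]²`. -/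
noncomputable def seiCV2 (T : FinRootedTree V) (c : V → ℝ) (B : ℕ) (r : V → ℝ)
    (fuel : ℕ) (v : Finset V) : ℝ :=
  seiVar T c B r fuel v /
    (seiE T c B r fuel v fun y => (v.card : ℝ) * y) ^ 2

/-- The height of the forest `T_v`: the largest depth of a descendant of a node
of `v`, minus the depth of `v`. -/
def forestHeight (T : FinRootedTree V) (v : Finset V) : ℕ :=
  (v.biUnion T.desc).sup T.depth - v.sup T.depth

/-- `ℒ_i(v)`: the collection of all hypernodes that can be chosen by the SEI
selection process at level `i`, starting from `x_0 = v` at level `0`. -/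
def levelSet (T : FinRootedTree V) (B : ℕ) (v : Finset V) : ℕ → Finset (Finset V)
  | 0 => {v}
  | i + 1 =>
      (levelSet T B v i).biUnion fun u =>
        if T.succs u = ∅ then ∅ else T.hyper B u

/-- The pairs `(x_i, x_{i+1})` with `x_i ∈ ℒ_i(v)` non-terminal and
`x_{i+1} ∈ H(x_i)`. -/
def pairSet (T : FinRootedTree V) (B : ℕ) (v : Finset V) (i : ℕ) :
    Finset (Finset V × Finset V) :=
  ((T.levelSet B v i).filter fun u => T.succs u ≠ ∅).biUnion fun u =>
    (T.hyper B u).image fun w => (u, w)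

/-- The one-step factor
`α(x_i, x_{i+1}) = (r(S(x_i))/r(x_{i+1})) * (Cost(T_{x_{i+1}})/Cost(T_{S(x_i)}))`. -/
noncomputable def alpha1 (T : FinRootedTree V) (c r : V → ℝ) (u w : Finset V) : ℝ :=
  ((∑ a ∈ T.succs u, r a) / (∑ a ∈ w, r a)) *
    (T.forestCost c w / T.forestCost c (T.succs u))

theorem _root_.Finset.sum_powersetCard_sum_eq_choose_smul {α M : Type*} [DecidableEq α]
    [AddCommMonoid M] (s : Finset α) {k : ℕ} (hk : 1 ≤ k) (f : α → M) :
    ∑ t ∈ s.powersetCard k, ∑ a ∈ t, f a =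
      (#s - 1).choose (k - 1) • ∑ a ∈ s, f a := by
  rw [sum_comm' (t' := s) (s' := fun a => (s.powersetCard k).filter (a ∈ ·)), smul_sum]
  · refine sum_congr rfl fun a ha => ?_
    have hcard := card_filter_powersetCard_subset {a} s k (singleton_subset_iff.2 ha) hk
    simp only [singleton_subset_iff, card_singleton] at hcard
    rw [sum_const, hcard]
  · intro t a
    simp only [mem_filter, mem_powersetCard]
    exact ⟨fun ⟨⟨hts, htk⟩, ha⟩ => ⟨⟨⟨hts, htk⟩, ha⟩, hts ha⟩,
      fun ⟨h, _⟩ => h⟩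

variable {T : FinRootedTree V}

lemma mem_children {x w : V} : w ∈ T.children x ↔ w ≠ T.root ∧ T.parent w = x := by
  simp [children]

lemma depth_of_mem_children {x w : V} (h : w ∈ T.children x) :
    T.depth w = T.depth x + 1 := by
  rw [mem_children] at h
  rw [← T.depth_parent w h.1, h.2]

lemma mem_succs {u : Finset V} {y : V} : y ∈ T.succs u ↔ ∃ x ∈ u, y ∈ T.children x :=
  mem_biUnion

lemma depth_parent_iterate {w : V} {k : ℕ} (hk : k ≤ T.depth w) :
    T.depth (T.parent^[k] w) = T.depth w - k := by
  induction k with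
  | zero => rfl
  | succ k ih =>
    have h := ih (by omega)
    have hne : T.parent^[k] w ≠ T.root := fun h' => by
      rw [h', T.depth_root] at h
      omega
    rw [Function.iterate_succ_apply']
    have := T.depth_parent _ hne
    omega

lemma depth_lt_card (x : V) : T.depth x < Fintype.card V := by
  have hinj : Set.InjOn (fun k => T.parent^[k] x) (range (T.depth x + 1)) := by
    intro a ha b hb hab
    simp only [coe_range, Set.mem_Iio] at ha hb
    have h := congrArg T.depth hab
    simp only [depth_parent_iterate (T := T) (show a ≤ T.depth x by omega),
      depth_parent_iterate (T := T) (show b ≤ T.depth x by omega)] at h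
    omega
  have := card_le_card_of_injOn _ (fun _ _ => mem_coe.2 (mem_univ _)) hinj
  rw [card_range, card_univ] at this
  omega

lemma forestHeight_le_card (u : Finset V) : T.forestHeight u ≤ Fintype.card V := by
  have : (u.biUnion T.desc).sup T.depth ≤ Fintype.card V :=
    Finset.sup_le fun y _ => (depth_lt_card y).le
  rw [forestHeight]
  omega

lemma mem_desc {x w : V} : w ∈ T.desc x ↔ ∃ k ≤ T.depth w, T.parent^[k] w = x := by
  simp [desc]

lemma self_mem_desc (x : V) : x ∈ T.desc x := mem_desc.2 ⟨0, Nat.zero_le _, rfl⟩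

lemma depth_le_of_mem_desc {x w : V} (h : w ∈ T.desc x) : T.depth x ≤ T.depth w := by
  obtain ⟨k, hk, rfl⟩ := mem_desc.1 h
  rw [depth_parent_iterate hk]
  omega

lemma mem_desc_trans {x y z : V} (hyx : y ∈ T.desc x) (hxz : x ∈ T.desc z) :
    y ∈ T.desc z := by
  obtain ⟨k, hk, rfl⟩ := mem_desc.1 hyx
  obtain ⟨j, hj, rfl⟩ := mem_desc.1 hxz
  rw [depth_parent_iterate hk] at hj
  exact mem_desc.2 ⟨j + k, by omega, Function.iterate_add_apply _ _ _ _⟩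

lemma desc_subset_of_mem_children {x y : V} (hy : y ∈ T.children x) :
    T.desc y ⊆ T.desc x := by
  rw [mem_children] at hy
  have hxy : y ∈ T.desc x :=
    mem_desc.2 ⟨1, by have := T.depth_parent y hy.1; omega, hy.2⟩
  exact fun w hw => mem_desc_trans hw hxy

lemma disjoint_desc {y y' : V} (hd : T.depth y = T.depth y') (hne : y ≠ y') :
    Disjoint (T.desc y) (T.desc y') := by
  refine disjoint_left.2 fun w hw hw' => hne ?_
  obtain ⟨k, hk, rfl⟩ := mem_desc.1 hw
  obtain ⟨j, hj, rfl⟩ := mem_desc.1 hw'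
  rw [depth_parent_iterate hk, depth_parent_iterate hj] at hd
  rw [show k = j by omega]

lemma desc_eq_insert_biUnion (x : V) :
    T.desc x = insert x ((T.children x).biUnion T.desc) := by
  ext w
  simp only [mem_insert, mem_biUnion]
  constructor
  · intro h
    obtain ⟨k, hk, hw⟩ := mem_desc.1 h
    cases k with
    | zero => exact Or.inl hw
    | succ j =>
      refine Or.inr ⟨T.parent^[j] w, mem_children.2 ⟨fun hroot => ?_, ?_⟩,
        mem_desc.2 ⟨j, by omega, rfl⟩⟩
      · have hd := depth_parent_iterate (T := T) (show j ≤ T.depth w by omega)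
        rw [hroot, T.depth_root] at hd
        omega
      · rwa [← Function.iterate_succ_apply' T.parent]
  · rintro (rfl | ⟨y, hy, hw⟩)
    · exact self_mem_desc w
    · exact desc_subset_of_mem_children hy hw

lemma subtreeCost_eq (c : V → ℝ) (x : V) :
    T.subtreeCost c x = c x + ∑ y ∈ T.children x, T.subtreeCost c y := by
  rw [subtreeCost, desc_eq_insert_biUnion, sum_insert, sum_biUnion]
  · rfl
  · intro y hy y' hy' hne
    exact disjoint_desc (by rw [depth_of_mem_children hy, depth_of_mem_children hy']) hne
  · simp only [mem_biUnion, not_exists, not_and]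
    intro y hy hx
    have := depth_le_of_mem_desc hx
    rw [depth_of_mem_children hy] at this
    omega

lemma forestCost_eq (c : V → ℝ) (u : Finset V) :
    T.forestCost c u = ∑ x ∈ u, c x + T.forestCost c (T.succs u) := by
  have hdisj : (u : Set V).PairwiseDisjoint T.children := fun x _ x' _ hne =>
    disjoint_left.2 fun w hw hw' => hne ((mem_children.1 hw).2 ▸ (mem_children.1 hw').2)
  rw [forestCost, succs, forestCost, sum_biUnion hdisj, ← sum_add_distrib]
  exact sum_congr rfl fun x _ => subtreeCost_eq c x

lemma forestCost_pos {c : V → ℝ} (hpos : ∀ x, 0 < T.subtreeCost c x) {u : Finset V}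
    (hu : u.Nonempty) : 0 < T.forestCost c u :=
  sum_pos (fun x _ => hpos x) hu

section Hyper

variable {B : ℕ} {u w : Finset V}

lemma mem_hyper : w ∈ T.hyper B u ↔ w ⊆ T.succs u ∧ #w = min B #(T.succs u) :=
  mem_powersetCard

lemma hyper_nonempty (B : ℕ) (u : Finset V) : (T.hyper B u).Nonempty :=
  powersetCard_nonempty.2 (min_le_right _ _)

lemma one_le_min_card_succs (hB : 1 ≤ B) (hs : T.succs u ≠ ∅) : 1 ≤ min B #(T.succs u) :=
  le_min hB (card_pos.2 (nonempty_iff_ne_empty.2 hs))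

lemma nonempty_of_mem_hyper (hB : 1 ≤ B) (hs : T.succs u ≠ ∅) (hw : w ∈ T.hyper B u) :
    w.Nonempty := by
  rw [← card_pos, (mem_hyper.1 hw).2]
  exact one_le_min_card_succs hB hs

lemma IsHypernode.sup_depth (hu : T.IsHypernode u) {x : V} (hx : x ∈ u) :
    u.sup T.depth = T.depth x :=
  le_antisymm (Finset.sup_le fun y hy => (hu.2 y hy x hx).le) (le_sup hx)

lemma IsHypernode.depth_of_mem_succs (hu : T.IsHypernode u) {x y : V} (hx : x ∈ u)
    (hy : y ∈ T.succs u) : T.depth y = T.depth x + 1 := by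
  obtain ⟨x', hx', hy⟩ := mem_succs.1 hy
  rw [depth_of_mem_children hy, hu.2 x' hx' x hx]

lemma IsHypernode.of_mem_hyper (hB : 1 ≤ B) (hu : T.IsHypernode u) (hs : T.succs u ≠ ∅)
    (hw : w ∈ T.hyper B u) : T.IsHypernode w := by
  obtain ⟨x, hx⟩ := hu.1
  have hsub := (mem_hyper.1 hw).1
  refine ⟨nonempty_of_mem_hyper hB hs hw, fun a ha b hb => ?_⟩
  rw [hu.depth_of_mem_succs hx (hsub ha), hu.depth_of_mem_succs hx (hsub hb)]

lemma forestHeight_lt_of_mem_hyper (hB : 1 ≤ B) (hu : T.IsHypernode u)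
    (hs : T.succs u ≠ ∅) (hw : w ∈ T.hyper B u) : T.forestHeight w < T.forestHeight u := by
  obtain ⟨x, hx⟩ := hu.1
  obtain ⟨y, hy⟩ := nonempty_of_mem_hyper hB hs hw
  have hsub := (mem_hyper.1 hw).1
  have hdesc : w.biUnion T.desc ⊆ u.biUnion T.desc := fun z hz => by
    obtain ⟨y', hy', hz⟩ := mem_biUnion.1 hz
    obtain ⟨x', hx', hc⟩ := mem_succs.1 (hsub hy')
    exact mem_biUnion.2 ⟨x', hx', desc_subset_of_mem_children hc hz⟩
  have hy_le : T.depth y ≤ (w.biUnion T.desc).sup T.depth :=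
    le_sup (mem_biUnion.2 ⟨y, hy, self_mem_desc y⟩)
  have hmono := sup_mono (f := T.depth) hdesc
  have hdy := hu.depth_of_mem_succs hx (hsub hy)
  rw [forestHeight, forestHeight, hu.sup_depth hx, (hu.of_mem_hyper hB hs hw).sup_depth hy]
  omega

lemma forestHeight_pos (hB : 1 ≤ B) (hu : T.IsHypernode u) (hs : T.succs u ≠ ∅) :
    0 < T.forestHeight u := by
  obtain ⟨w, hw⟩ := T.hyper_nonempty B u
  exact (Nat.zero_le _).trans_lt (forestHeight_lt_of_mem_hyper hB hu hs hw)

lemma succs_eq_empty_of_forestHeight_eq_zero (hB : 1 ≤ B) (hu : T.IsHypernode u)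
    (h : T.forestHeight u = 0) : T.succs u = ∅ := by
  by_contra hs
  exact (forestHeight_pos hB hu hs).ne' h

end Hyper

section Levels

variable {B i : ℕ} {v u w : Finset V}

lemma mem_levelSet_zero : u ∈ T.levelSet B v 0 ↔ u = v := mem_singleton

lemma mem_levelSet_succ :
    u ∈ T.levelSet B v (i + 1) ↔
      ∃ u' ∈ T.levelSet B v i, T.succs u' ≠ ∅ ∧ u ∈ T.hyper B u' := by
  simp only [levelSet, mem_biUnion]
  refine exists_congr fun u' => and_congr_right fun _ => ?_
  split_ifs with h <;> simp [h]

lemma mem_pairSet :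
    (u, w) ∈ T.pairSet B v i ↔
      u ∈ T.levelSet B v i ∧ T.succs u ≠ ∅ ∧ w ∈ T.hyper B u := by
  simp [pairSet, and_assoc]

lemma IsHypernode.of_mem_levelSet (hB : 1 ≤ B) (hv : T.IsHypernode v)
    (hu : u ∈ T.levelSet B v i) : T.IsHypernode u := by
  induction i generalizing u with
  | zero => rwa [mem_levelSet_zero.1 hu]
  | succ i ih =>
    obtain ⟨u', hu', hs, hw⟩ := mem_levelSet_succ.1 hu
    exact (ih hu').of_mem_hyper hB hs hw

lemma forestHeight_add_le_of_mem_levelSet (hB : 1 ≤ B) (hv : T.IsHypernode v)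
    (hu : u ∈ T.levelSet B v i) : T.forestHeight u + i ≤ T.forestHeight v := by
  induction i generalizing u with
  | zero => rw [mem_levelSet_zero.1 hu]; rfl
  | succ i ih =>
    obtain ⟨u', hu', hs, hw⟩ := mem_levelSet_succ.1 hu
    have := forestHeight_lt_of_mem_hyper hB (hv.of_mem_levelSet hB hu') hs hw
    have := ih hu'
    omega

lemma lt_forestHeight_of_mem_levelSet (hB : 1 ≤ B) (hv : T.IsHypernode v)
    (hu : u ∈ T.levelSet B v i) (hs : T.succs u ≠ ∅) : i < T.forestHeight v := by
  have := forestHeight_pos hB (hv.of_mem_levelSet hB hu) hs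
  have := forestHeight_add_le_of_mem_levelSet hB hv hu
  omega

end Levels

noncomputable def selectProb (T : FinRootedTree V) (r : V → ℝ) (u w : Finset V) : ℝ :=
  (∑ a ∈ w, r a) /
    ((∑ a ∈ T.succs u, r a) * (((#(T.succs u) - 1).choose (#w - 1) : ℕ) : ℝ))

section SelectProb

variable {B : ℕ} {r : V → ℝ} {u w : Finset V}

lemma selectProb_of_mem_hyper (hw : w ∈ T.hyper B u) :
    T.selectProb r u w = (∑ a ∈ w, r a) /
      ((∑ a ∈ T.succs u, r a) *
        (((#(T.succs u) - 1).choose (min B #(T.succs u) - 1) : ℕ) : ℝ)) := by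
  rw [selectProb, (mem_hyper.1 hw).2]

lemma choose_succs_pos (hB : 1 ≤ B) (hs : T.succs u ≠ ∅) :
    (0 : ℝ) < ((#(T.succs u) - 1).choose (min B #(T.succs u) - 1) : ℕ) := by
  have := one_le_min_card_succs hB hs
  exact_mod_cast Nat.choose_pos (by omega)

lemma sum_succs_pos (hr : ∀ x, 0 < r x) (hs : T.succs u ≠ ∅) : 0 < ∑ a ∈ T.succs u, r a :=
  sum_pos (fun a _ => hr a) (nonempty_iff_ne_empty.2 hs)

lemma selectProb_pos (hr : ∀ x, 0 < r x) (hB : 1 ≤ B) (hs : T.succs u ≠ ∅)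
    (hw : w ∈ T.hyper B u) : 0 < T.selectProb r u w := by
  rw [selectProb_of_mem_hyper hw]
  exact div_pos (sum_pos (fun a _ => hr a) (nonempty_of_mem_hyper hB hs hw))
    (mul_pos (sum_succs_pos hr hs) (choose_succs_pos hB hs))

lemma sum_selectProb (hr : ∀ x, 0 < r x) (hB : 1 ≤ B) (hs : T.succs u ≠ ∅) :
    ∑ w ∈ T.hyper B u, T.selectProb r u w = 1 := by
  have hR := (sum_succs_pos hr hs).ne'
  have hK := (choose_succs_pos hB hs).ne'
  rw [sum_congr rfl fun w hw => selectProb_of_mem_hyper hw, ← sum_div, hyper,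
    sum_powersetCard_sum_eq_choose_smul _ (one_le_min_card_succs hB hs), nsmul_eq_mul]
  field_simp

lemma sum_selectProb_mul_ratio_mul_sum (hr : ∀ x, 0 < r x) (hB : 1 ≤ B)
    (hs : T.succs u ≠ ∅) (f : V → ℝ) :
    ∑ w ∈ T.hyper B u,
        T.selectProb r u w * ((∑ a ∈ T.succs u, r a) / ∑ a ∈ w, r a) * ∑ a ∈ w, f a =
      ∑ a ∈ T.succs u, f a := by
  have hR := (sum_succs_pos hr hs).ne'
  have hK := (choose_succs_pos hB hs).ne'
  have hterm : ∀ w ∈ T.hyper B u,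
      T.selectProb r u w * ((∑ a ∈ T.succs u, r a) / ∑ a ∈ w, r a) * ∑ a ∈ w, f a =
        (∑ a ∈ w, f a) /
          (((#(T.succs u) - 1).choose (min B #(T.succs u) - 1) : ℕ) : ℝ) := by
    intro w hw
    have hrw := (sum_pos (fun a _ => hr a) (nonempty_of_mem_hyper hB hs hw)).ne'
    rw [selectProb_of_mem_hyper hw]
    field_simp
  rw [sum_congr rfl hterm, ← sum_div, hyper,
    sum_powersetCard_sum_eq_choose_smul _ (one_le_min_card_succs hB hs), nsmul_eq_mul]
  field_simp

end SelectProb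

section Expectation

variable {c r : V → ℝ} {B : ℕ}

lemma seiE_of_succs_eq_empty {u : Finset V} (hs : T.succs u = ∅) (fuel : ℕ) (g : ℝ → ℝ) :
    seiE T c B r fuel u g = g ((∑ x ∈ u, c x) / #u) := by
  cases fuel <;> simp [seiE, hs]

lemma seiE_succ {u : Finset V} (hs : T.succs u ≠ ∅) (fuel : ℕ) (g : ℝ → ℝ) :
    seiE T c B r (fuel + 1) u g =
      ∑ w ∈ T.hyper B u, T.selectProb r u w *
        seiE T c B r fuel w fun y =>
          g ((∑ x ∈ u, c x) / #u +
            (#w / #u) * ((∑ a ∈ T.succs u, r a) / ∑ a ∈ w, r a) * y) := by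
  rw [seiE, if_neg hs]
  rfl

lemma seiE_add (fuel : ℕ) (u : Finset V) (f g : ℝ → ℝ) :
    seiE T c B r fuel u (fun y => f y + g y) = seiE T c B r fuel u f + seiE T c B r fuel u g := by
  induction fuel generalizing u f g with
  | zero => rfl
  | succ fuel ih =>
    by_cases hs : T.succs u = ∅
    · simp only [seiE_of_succs_eq_empty hs]
    · simp only [seiE_succ hs, ih, mul_add, sum_add_distrib]

lemma seiE_const_mul (fuel : ℕ) (u : Finset V) (a : ℝ) (f : ℝ → ℝ) :
    seiE T c B r fuel u (fun y => a * f y) = a * seiE T c B r fuel u f := by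
  induction fuel generalizing u f with
  | zero => rfl
  | succ fuel ih =>
    by_cases hs : T.succs u = ∅
    · simp only [seiE_of_succs_eq_empty hs]
    · simp only [seiE_succ hs, ih, mul_sum, mul_left_comm]

lemma seiE_const (hr : ∀ x, 0 < r x) (hB : 1 ≤ B) (fuel : ℕ) (u : Finset V) (a : ℝ) :
    seiE T c B r fuel u (fun _ => a) = a := by
  induction fuel generalizing u with
  | zero => rfl
  | succ fuel ih =>
    by_cases hs : T.succs u = ∅
    · simp only [seiE_of_succs_eq_empty hs]
    · simp only [seiE_succ hs, ih, ← sum_mul, sum_selectProb hr hB hs, one_mul]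

/-- `E[g(Z_u)]` for `Z_u = |u| · C_SEI(T_u)`. -/
noncomputable def scaledSeiE (T : FinRootedTree V) (c : V → ℝ) (B : ℕ) (r : V → ℝ)
    (fuel : ℕ) (u : Finset V) (g : ℝ → ℝ) : ℝ :=
  seiE T c B r fuel u fun y => g (#u * y)

lemma scaledSeiE_add (fuel : ℕ) (u : Finset V) (f g : ℝ → ℝ) :
    T.scaledSeiE c B r fuel u (fun z => f z + g z) =
      T.scaledSeiE c B r fuel u f + T.scaledSeiE c B r fuel u g :=
  seiE_add fuel u _ _

lemma scaledSeiE_const_mul (fuel : ℕ) (u : Finset V) (a : ℝ) (f : ℝ → ℝ) :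
    T.scaledSeiE c B r fuel u (fun z => a * f z) = a * T.scaledSeiE c B r fuel u f :=
  seiE_const_mul fuel u a _

lemma scaledSeiE_const (hr : ∀ x, 0 < r x) (hB : 1 ≤ B) (fuel : ℕ) (u : Finset V) (a : ℝ) :
    T.scaledSeiE c B r fuel u (fun _ => a) = a :=
  seiE_const hr hB fuel u a

lemma scaledSeiE_of_succs_eq_empty {u : Finset V} (hu : u.Nonempty) (hs : T.succs u = ∅)
    (fuel : ℕ) (g : ℝ → ℝ) : T.scaledSeiE c B r fuel u g = g (T.forestCost c u) := by
  have hcard : (#u : ℝ) ≠ 0 := by exact_mod_cast (card_pos.2 hu).ne'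
  rw [scaledSeiE, seiE_of_succs_eq_empty hs, forestCost_eq, hs, mul_div_cancel₀ _ hcard]
  simp [forestCost]

lemma scaledSeiE_succ {u : Finset V} (hu : u.Nonempty) (hs : T.succs u ≠ ∅) (fuel : ℕ)
    (g : ℝ → ℝ) :
    T.scaledSeiE c B r (fuel + 1) u g =
      ∑ w ∈ T.hyper B u, T.selectProb r u w *
        T.scaledSeiE c B r fuel w fun z =>
          g (∑ x ∈ u, c x + (∑ a ∈ T.succs u, r a) / (∑ a ∈ w, r a) * z) := by
  have hcard : (#u : ℝ) ≠ 0 := by exact_mod_cast (card_pos.2 hu).ne'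
  rw [scaledSeiE, seiE_succ hs]
  refine sum_congr rfl fun w _ => ?_
  congr 2
  funext y
  congr 1
  field_simp

end Expectation

section Moments

variable {c r : V → ℝ} {B : ℕ}

lemma sum_selectProb_mul_ratio_mul_forestCost (hr : ∀ x, 0 < r x) (hB : 1 ≤ B)
    {u : Finset V} (hs : T.succs u ≠ ∅) :
    ∑ w ∈ T.hyper B u,
        T.selectProb r u w * ((∑ a ∈ T.succs u, r a) / ∑ a ∈ w, r a) * T.forestCost c w =
      T.forestCost c (T.succs u) :=
  sum_selectProb_mul_ratio_mul_sum hr hB hs (T.subtreeCost c)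

lemma scaledSeiE_id (hr : ∀ x, 0 < r x) (hB : 1 ≤ B) (fuel : ℕ) {u : Finset V}
    (hu : T.IsHypernode u) (hfuel : T.forestHeight u ≤ fuel) :
    T.scaledSeiE c B r fuel u (fun z => z) = T.forestCost c u := by
  induction fuel generalizing u with
  | zero =>
    exact scaledSeiE_of_succs_eq_empty hu.1
      (succs_eq_empty_of_forestHeight_eq_zero hB hu (by omega)) 0 _
  | succ fuel ih =>
    by_cases hs : T.succs u = ∅
    · exact scaledSeiE_of_succs_eq_empty hu.1 hs _ _
    calc T.scaledSeiE c B r (fuel + 1) u (fun z => z)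
        = ∑ w ∈ T.hyper B u, (T.selectProb r u w * ∑ x ∈ u, c x +
            T.selectProb r u w * ((∑ a ∈ T.succs u, r a) / ∑ a ∈ w, r a) *
              T.forestCost c w) := by
          rw [scaledSeiE_succ hu.1 hs]
          refine sum_congr rfl fun w hw => ?_
          have hw' := hu.of_mem_hyper hB hs hw
          rw [scaledSeiE_add, scaledSeiE_const hr hB, scaledSeiE_const_mul,
            ih hw' (by have := forestHeight_lt_of_mem_hyper hB hu hs hw; omega)]
          ring
      _ = ∑ x ∈ u, c x + T.forestCost c (T.succs u) := by
          rw [sum_add_distrib, ← sum_mul, sum_selectProb hr hB hs, one_mul,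
            sum_selectProb_mul_ratio_mul_forestCost hr hB hs]
      _ = T.forestCost c u := (forestCost_eq c u).symm

lemma selectProb_mul_scaledSeiE_affine_sq_le (hpos : ∀ x, 0 < T.subtreeCost c x)
    (hr : ∀ x, 0 < r x) (hB : 1 ≤ B) {u w : Finset V} (hs : T.succs u ≠ ∅)
    (hw : w ∈ T.hyper B u) {fuel : ℕ} {P P' : ℝ} (hstep : alpha1 T c r u w * P' ≤ P)
    (hmean : T.scaledSeiE c B r fuel w (fun z => z) = T.forestCost c w)
    (hsq : T.scaledSeiE c B r fuel w (fun z => z ^ 2) ≤ P' * T.forestCost c w ^ 2)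
    (c₀ : ℝ) :
    T.selectProb r u w * T.scaledSeiE c B r fuel w
        (fun z => (c₀ + (∑ a ∈ T.succs u, r a) / (∑ a ∈ w, r a) * z) ^ 2) ≤
      T.selectProb r u w * c₀ ^ 2 +
        2 * c₀ * (T.selectProb r u w * ((∑ a ∈ T.succs u, r a) / ∑ a ∈ w, r a) *
          T.forestCost c w) +
        P * T.forestCost c (T.succs u) *
          (T.selectProb r u w * ((∑ a ∈ T.succs u, r a) / ∑ a ∈ w, r a) * T.forestCost c w) := by
  set ρ := (∑ a ∈ T.succs u, r a) / ∑ a ∈ w, r a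
  set Cₛ := T.forestCost c (T.succs u)
  have hρ : 0 ≤ ρ := div_nonneg (sum_succs_pos hr hs).le
    (sum_pos (fun a _ => hr a) (nonempty_of_mem_hyper hB hs hw)).le
  have hCw := forestCost_pos hpos (nonempty_of_mem_hyper hB hs hw)
  have hCₛ : 0 < Cₛ := forestCost_pos hpos (nonempty_iff_ne_empty.2 hs)
  have hα : alpha1 T c r u w * Cₛ = ρ * T.forestCost c w := by
    change ρ * (T.forestCost c w / Cₛ) * Cₛ = _
    rw [mul_assoc, div_mul_cancel₀ _ hCₛ.ne']
  have hsq_le : ρ ^ 2 * T.scaledSeiE c B r fuel w (fun z => z ^ 2) ≤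
      P * Cₛ * (ρ * T.forestCost c w) :=
    calc ρ ^ 2 * T.scaledSeiE c B r fuel w (fun z => z ^ 2)
        ≤ ρ ^ 2 * (P' * T.forestCost c w ^ 2) := mul_le_mul_of_nonneg_left hsq (sq_nonneg ρ)
      _ = alpha1 T c r u w * P' * Cₛ * (ρ * T.forestCost c w) := by
          linear_combination (-(P' * ρ * T.forestCost c w)) * hα
      _ ≤ P * Cₛ * (ρ * T.forestCost c w) := by
          gcongr
  have hexpand : (fun z => (c₀ + ρ * z) ^ 2) =
      fun z => c₀ ^ 2 + 2 * c₀ * ρ * z + ρ ^ 2 * z ^ 2 := by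
    funext z
    ring
  rw [hexpand, scaledSeiE_add, scaledSeiE_add, scaledSeiE_const hr hB, scaledSeiE_const_mul,
    scaledSeiE_const_mul, hmean]
  nlinarith [mul_le_mul_of_nonneg_left hsq_le (selectProb_pos hr hB hs hw).le]

lemma scaledSeiE_sq_succ_le (hc : ∀ x, 0 ≤ c x) (hpos : ∀ x, 0 < T.subtreeCost c x)
    (hr : ∀ x, 0 < r x) (hB : 1 ≤ B) {u : Finset V} (hu : u.Nonempty) (hs : T.succs u ≠ ∅)
    {fuel : ℕ} {P P' : ℝ} (hP : 1 ≤ P)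
    (hstep : ∀ w ∈ T.hyper B u, alpha1 T c r u w * P' ≤ P)
    (hmean : ∀ w ∈ T.hyper B u, T.scaledSeiE c B r fuel w (fun z => z) = T.forestCost c w)
    (hsq : ∀ w ∈ T.hyper B u,
      T.scaledSeiE c B r fuel w (fun z => z ^ 2) ≤ P' * T.forestCost c w ^ 2) :
    T.scaledSeiE c B r (fuel + 1) u (fun z => z ^ 2) ≤ P * T.forestCost c u ^ 2 := by
  set c₀ := ∑ x ∈ u, c x
  set Cₛ := T.forestCost c (T.succs u)
  have hc₀ : 0 ≤ c₀ := sum_nonneg fun x _ => hc x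
  have hCₛ : 0 < Cₛ := forestCost_pos hpos (nonempty_iff_ne_empty.2 hs)
  calc T.scaledSeiE c B r (fuel + 1) u (fun z => z ^ 2)
      ≤ ∑ w ∈ T.hyper B u, (T.selectProb r u w * c₀ ^ 2 +
          2 * c₀ * (T.selectProb r u w * ((∑ a ∈ T.succs u, r a) / ∑ a ∈ w, r a) *
            T.forestCost c w) +
          P * Cₛ * (T.selectProb r u w * ((∑ a ∈ T.succs u, r a) / ∑ a ∈ w, r a) *
            T.forestCost c w)) := by
        rw [scaledSeiE_succ hu hs]
        exact sum_le_sum fun w hw => selectProb_mul_scaledSeiE_affine_sq_le hpos hr hB hs hw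
          (hstep w hw) (hmean w hw) (hsq w hw) c₀
    _ = c₀ ^ 2 + 2 * c₀ * Cₛ + P * Cₛ * Cₛ := by
        rw [sum_add_distrib, sum_add_distrib, ← sum_mul, ← mul_sum, ← mul_sum,
          sum_selectProb hr hB hs, sum_selectProb_mul_ratio_mul_forestCost hr hB hs, one_mul]
    _ ≤ P * (c₀ + Cₛ) ^ 2 := by
        nlinarith [mul_nonneg (sub_nonneg.2 hP) (mul_nonneg hc₀ hCₛ.le)]
    _ = P * T.forestCost c u ^ 2 := by rw [forestCost_eq]

lemma scaledSeiE_sq_le (hc : ∀ x, 0 ≤ c x) (hpos : ∀ x, 0 < T.subtreeCost c x)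
    (hr : ∀ x, 0 < r x) (hB : 1 ≤ B) {v : Finset V} (hv : T.IsHypernode v) (P : ℕ → ℝ)
    (hP_one : ∀ i, 1 ≤ P i)
    (hP_step : ∀ i u w, u ∈ T.levelSet B v i → T.succs u ≠ ∅ → w ∈ T.hyper B u →
      alpha1 T c r u w * P (i + 1) ≤ P i)
    (fuel : ℕ) {i : ℕ} {u : Finset V} (hu : u ∈ T.levelSet B v i)
    (hfuel : T.forestHeight u ≤ fuel) :
    T.scaledSeiE c B r fuel u (fun z => z ^ 2) ≤ P i * T.forestCost c u ^ 2 := by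
  induction fuel generalizing i u with
  | zero =>
    have hu' := hv.of_mem_levelSet hB hu
    rw [scaledSeiE_of_succs_eq_empty hu'.1
      (succs_eq_empty_of_forestHeight_eq_zero hB hu' (by omega))]
    exact le_mul_of_one_le_left (sq_nonneg _) (hP_one i)
  | succ fuel ih =>
    have hu' := hv.of_mem_levelSet hB hu
    by_cases hs : T.succs u = ∅
    · rw [scaledSeiE_of_succs_eq_empty hu'.1 hs]
      exact le_mul_of_one_le_left (sq_nonneg _) (hP_one i)
    have hw_fuel : ∀ w ∈ T.hyper B u, T.forestHeight w ≤ fuel := fun w hw => by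
      have := forestHeight_lt_of_mem_hyper hB hu' hs hw
      omega
    exact scaledSeiE_sq_succ_le hc hpos hr hB hu'.1 hs (hP_one i)
      (fun w hw => hP_step i u w hu hs hw)
      (fun w hw => scaledSeiE_id hr hB fuel (hu'.of_mem_hyper hB hs hw) (hw_fuel w hw))
      (fun w hw => ih (mem_levelSet_succ.2 ⟨u, hu, hs, hw⟩) (hw_fuel w hw))

lemma seiCV2_le_sub_one {fuel : ℕ} {v : Finset V} {P Q : ℝ} (hQ : 0 < Q)
    (hmean : T.scaledSeiE c B r fuel v (fun z => z) = Q)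
    (hsq : T.scaledSeiE c B r fuel v (fun z => z ^ 2) ≤ P * Q ^ 2) :
    seiCV2 T c B r fuel v ≤ P - 1 := by
  change (T.scaledSeiE c B r fuel v (fun z => z ^ 2) - T.scaledSeiE c B r fuel v (fun z => z) ^ 2) /
    T.scaledSeiE c B r fuel v (fun z => z) ^ 2 ≤ P - 1
  rw [hmean, div_le_iff₀ (by positivity)]
  linarith

end Moments

section MaxAlpha

variable {c r : V → ℝ} {B : ℕ}

lemma exists_one_le_alpha1 (hpos : ∀ x, 0 < T.subtreeCost c x) (hr : ∀ x, 0 < r x)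
    (hB : 1 ≤ B) {u : Finset V} (hs : T.succs u ≠ ∅) :
    ∃ w ∈ T.hyper B u, 1 ≤ alpha1 T c r u w := by
  have hCₛ := (forestCost_pos (c := c) hpos (nonempty_iff_ne_empty.2 hs)).ne'
  have hmean : ∑ w ∈ T.hyper B u, T.selectProb r u w * alpha1 T c r u w = 1 :=
    calc ∑ w ∈ T.hyper B u, T.selectProb r u w * alpha1 T c r u w
        = (∑ w ∈ T.hyper B u, T.selectProb r u w *
            ((∑ a ∈ T.succs u, r a) / ∑ a ∈ w, r a) * T.forestCost c w) /
              T.forestCost c (T.succs u) := by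
          rw [sum_div]
          exact sum_congr rfl fun w _ => by rw [alpha1]; ring
      _ = 1 := by rw [sum_selectProb_mul_ratio_mul_forestCost hr hB hs, div_self hCₛ]
  have hle : ∑ w ∈ T.hyper B u, T.selectProb r u w * 1 ≤
      ∑ w ∈ T.hyper B u, T.selectProb r u w * alpha1 T c r u w := by
    rw [hmean]
    simpa only [mul_one] using (sum_selectProb hr hB hs).le
  obtain ⟨w, hw, hle⟩ := exists_le_of_sum_le (T.hyper_nonempty B u) hle
  exact ⟨w, hw, le_of_mul_le_mul_left hle (selectProb_pos hr hB hs hw)⟩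

noncomputable def levelMaxAlpha (T : FinRootedTree V) (c r : V → ℝ) (B : ℕ) (v : Finset V)
    (i : ℕ) : ℝ :=
  if h : (T.pairSet B v i).Nonempty then (T.pairSet B v i).sup' h fun p => alpha1 T c r p.1 p.2
  else 1

lemma levelMaxAlpha_of_nonempty {v : Finset V} {i : ℕ} (h : (T.pairSet B v i).Nonempty) :
    T.levelMaxAlpha c r B v i = (T.pairSet B v i).sup' h fun p => alpha1 T c r p.1 p.2 :=
  dif_pos h

lemma alpha1_le_levelMaxAlpha {v u w : Finset V} {i : ℕ} (h : (u, w) ∈ T.pairSet B v i) :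
    alpha1 T c r u w ≤ T.levelMaxAlpha c r B v i := by
  rw [levelMaxAlpha_of_nonempty ⟨_, h⟩]
  exact le_sup' (fun p : Finset V × Finset V => alpha1 T c r p.1 p.2) h

lemma one_le_levelMaxAlpha (hpos : ∀ x, 0 < T.subtreeCost c x) (hr : ∀ x, 0 < r x)
    (hB : 1 ≤ B) (v : Finset V) (i : ℕ) : 1 ≤ T.levelMaxAlpha c r B v i := by
  by_cases h : (T.pairSet B v i).Nonempty
  · obtain ⟨⟨u, w⟩, hp⟩ := h
    obtain ⟨hu, hs, -⟩ := mem_pairSet.1 hp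
    obtain ⟨w', hw', hα⟩ := exists_one_le_alpha1 hpos hr hB hs
    exact hα.trans (alpha1_le_levelMaxAlpha (mem_pairSet.2 ⟨hu, hs, hw'⟩))
  · rw [levelMaxAlpha, dif_neg h]

end MaxAlpha

/-- Paper's Corollary 2: `CV²(|v|·C_SEI(T_v)) ≤
∏_{i=0}^{n-1} max_{x_i ∈ ℒ_i(v), x_{i+1} ∈ H(x_i)} α(x_i, x_{i+1}) − 1`,
where `n` is the height of the forest `T_v`. -/
theorem sei_cv2_le_prod_max_alpha (T : FinRootedTree V) (c : V → ℝ)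
    (hc : ∀ x, 0 ≤ c x) (hpos : ∀ x : V, 0 < T.subtreeCost c x)
    (B : ℕ) (hB : 1 ≤ B) (r : V → ℝ) (hr : ∀ x : V, 0 < r x)
    (v : Finset V) (hv : T.IsHypernode v)
    (hne : ∀ i, i < T.forestHeight v → (T.pairSet B v i).Nonempty) :
    seiCV2 T c B r (Fintype.card V) v ≤
      (∏ i ∈ (Finset.range (T.forestHeight v)).attach,
        (T.pairSet B v i.1).sup' (hne i.1 (Finset.mem_range.mp i.2))
          fun p => alpha1 T c r p.1 p.2) - 1 := by
  set n := T.forestHeight v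
  set P : ℕ → ℝ := fun i => ∏ j ∈ Ico i n, T.levelMaxAlpha c r B v j
  have hP_one (i : ℕ) : 1 ≤ P i :=
    one_le_prod fun j _ => one_le_levelMaxAlpha hpos hr hB v j
  have hP_step (i : ℕ) (u w : Finset V) (hu : u ∈ T.levelSet B v i) (hs : T.succs u ≠ ∅)
      (hw : w ∈ T.hyper B u) : alpha1 T c r u w * P (i + 1) ≤ P i := by
    rw [show P i = T.levelMaxAlpha c r B v i * P (i + 1) from
      prod_eq_prod_Ico_succ_bot (lt_forestHeight_of_mem_levelSet hB hv hu hs) _]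
    exact mul_le_mul_of_nonneg_right (alpha1_le_levelMaxAlpha (mem_pairSet.2 ⟨hu, hs, hw⟩))
      (zero_le_one.trans (hP_one _))
  have hprod : (∏ i ∈ (range n).attach, (T.pairSet B v i.1).sup' (hne i.1 (mem_range.mp i.2))
      fun p => alpha1 T c r p.1 p.2) = P 0 := by
    calc _ = ∏ i ∈ (range n).attach, T.levelMaxAlpha c r B v i :=
          prod_congr rfl fun i _ => (levelMaxAlpha_of_nonempty _).symm
      _ = P 0 := by rw [prod_attach, range_eq_Ico]
  rw [hprod]
  exact seiCV2_le_sub_one (forestCost_pos hpos hv.1)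
    (scaledSeiE_id hr hB _ hv (forestHeight_le_card v))
    (scaledSeiE_sq_le hc hpos hr hB hv P hP_one hP_step _ (mem_levelSet_zero.2 rfl)
      (forestHeight_le_card v))

end FinRootedTree
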